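/- arXiv:1012.1332 — 3 statements merged into one kernel-verified Lean document; each statement's English description precedes it below -/
import Mathlib

section
/- Let h be the local rule of an additive CA on (ℤ/mℤ)^ℤ of radius r, given by h(x₋ᵣ,…,xᵣ) = Σ_{i=-r}^{r} aᵢ xᵢ. Then the induced global map is an involution if and only if a₀² + 2·Σ_{i=1}^{r} aᵢ a₋ᵢ = 1 (mod m) and for every j ≠ 0 with |j| ≤ 2r, Σ_{i} aᵢ a_{j-i} = 0 (mod m), where the sum ranges over indices i with -r ≤ i ≤ r and -r ≤ j - i ≤ r. -/
theorem stmt7 (m : ℕ) (hm : 0 < m) (r : ℕ) (a : ℤ → ZMod m)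
    (F : (ℤ → ZMod m) → (ℤ → ZMod m))
    (hF : ∀ x n, F x n = ∑ i ∈ Finset.Icc (-(r : ℤ)) r, a i * x (n + i)) :
    F ∘ F = id ↔
      ((a 0) ^ 2 + 2 * ∑ i ∈ Finset.Icc (1 : ℤ) r, a i * a (-i) = 1) ∧
      (∀ j : ℤ, j ≠ 0 → |j| ≤ 2 * r →
        ∑ i ∈ (Finset.Icc (-(r : ℤ)) r).filter
            (fun i => -(r : ℤ) ≤ j - i ∧ j - i ≤ r),
          a i * a (j - i) = 0) := by
  set c : ℤ → ZMod m := fun j =>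
    ∑ i ∈ (Finset.Icc (-(r : ℤ)) r).filter
        (fun i => -(r : ℤ) ≤ j - i ∧ j - i ≤ r), a i * a (j - i) with hc
  -- key: double application of F
  have key : ∀ x n, F (F x) n =
      ∑ j ∈ Finset.Icc (-(2 * r : ℤ)) (2 * r), c j * x (n + j) := by
    intro x n
    rw [hF]
    simp only [hF, Finset.mul_sum]
    have : ∀ j ∈ Finset.Icc (-(2 * r : ℤ)) (2 * r),
        c j * x (n + j) = ∑ i ∈ (Finset.Icc (-(r : ℤ)) r).filter
          (fun i => -(r : ℤ) ≤ j - i ∧ j - i ≤ r), a i * a (j - i) * x (n + j) := by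
      intro j _
      rw [hc]; exact Finset.sum_mul _ _ _
    rw [Finset.sum_congr rfl this]
    rw [Finset.sum_sigma', Finset.sum_sigma']
    apply Finset.sum_nbij' (i := fun p => (⟨p.1 + p.2, p.1⟩ : Σ _ : ℤ, ℤ))
      (j := fun q => (⟨q.2, q.1 - q.2⟩ : Σ _ : ℤ, ℤ))
    · intro p hp
      simp only [Finset.mem_sigma, Finset.mem_Icc, Finset.mem_filter] at hp ⊢
      omega
    · intro q hq
      simp only [Finset.mem_sigma, Finset.mem_Icc, Finset.mem_filter] at hq ⊢
      omega
    · intro p _; simp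
    · intro q _; simp
    · intro p _
      simp only
      rw [show p.1 + p.2 - p.1 = p.2 by ring, show n + (p.1 + p.2) = n + p.1 + p.2 by ring]
      ring
  -- c 0 equals the symmetric expression
  have hc0 : c 0 = a 0 ^ 2 + 2 * ∑ i ∈ Finset.Icc (1 : ℤ) r, a i * a (-i) := by
    rw [hc]
    have hfil : (Finset.Icc (-(r : ℤ)) r).filter
        (fun i => -(r : ℤ) ≤ 0 - i ∧ 0 - i ≤ r) = Finset.Icc (-(r : ℤ)) r := by
      apply Finset.filter_true_of_mem
      intro i hi
      simp only [Finset.mem_Icc] at hi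
      omega
    simp only
    rw [hfil]
    have hsplit : Finset.Icc (-(r : ℤ)) r =
        Finset.Icc (-(r : ℤ)) (-1) ∪ Finset.Icc 0 r := by
      ext i; simp only [Finset.mem_Icc, Finset.mem_union]; omega
    have hdisj : Disjoint (Finset.Icc (-(r : ℤ)) (-1)) (Finset.Icc (0 : ℤ) r) := by
      simp only [Finset.disjoint_left, Finset.mem_Icc]
      intro i h1 h2; omega
    rw [hsplit, Finset.sum_union hdisj]
    have hneg : ∑ i ∈ Finset.Icc (-(r : ℤ)) (-1), a i * a (0 - i)
        = ∑ i ∈ Finset.Icc (1 : ℤ) r, a i * a (-i) := by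
      apply Finset.sum_nbij' (i := fun i => -i) (j := fun i => -i)
      · intro i hi; simp only [Finset.mem_Icc] at hi ⊢; omega
      · intro i hi; simp only [Finset.mem_Icc] at hi ⊢; omega
      · intro i _; simp
      · intro i _; simp
      · intro i _
        rw [zero_sub, neg_neg]; ring
    rw [hneg]
    have h0r : Finset.Icc (0 : ℤ) r = insert 0 (Finset.Icc (1 : ℤ) r) := by
      ext i; simp only [Finset.mem_Icc, Finset.mem_insert]; omega
    rw [h0r, Finset.sum_insert (by simp [Finset.mem_Icc])]
    have : ∀ i ∈ Finset.Icc (1 : ℤ) r, a i * a (0 - i) = a i * a (-i) := by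
      intro i _; rw [zero_sub]
    rw [Finset.sum_congr rfl this]
    rw [zero_sub, neg_zero]
    ring
  constructor
  · intro h
    have hpt : ∀ (x : ℤ → ZMod m) (n : ℤ), ∑ j ∈ Finset.Icc (-(2 * r : ℤ)) (2 * r), c j * x (n + j) = x n := by
      intro x n
      rw [← key x n]
      exact congrFun (congrFun h x) n
    have hcj : ∀ j : ℤ, j ∈ Finset.Icc (-(2 * r : ℤ)) (2 * r) →
        c j = if j = 0 then 1 else 0 := by
      intro j hj
      have := hpt (fun t => if t = j then 1 else 0) 0
      simp only [zero_add, mul_ite, mul_one, mul_zero] at this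
      rw [Finset.sum_ite_eq'] at this
      rw [if_pos hj] at this
      rw [this]
      by_cases h0 : j = 0 <;> simp [h0, eq_comm]
    refine ⟨?_, ?_⟩
    · rw [← hc0]
      exact (hcj 0 (by simp only [Finset.mem_Icc]; omega)).trans (by simp)
    · intro j hj0 hjr
      have hj : j ∈ Finset.Icc (-(2 * r : ℤ)) (2 * r) := by
        simp only [Finset.mem_Icc]
        rw [abs_le] at hjr; omega
      have := hcj j hj
      rw [if_neg hj0] at this
      exact this
  · rintro ⟨h1, h2⟩
    funext x n
    show F (F x) n = x n
    rw [key]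
    have hterm : ∀ j ∈ Finset.Icc (-(2 * r : ℤ)) (2 * r),
        c j * x (n + j) = if j = 0 then x n else 0 := by
      intro j hj
      by_cases hj0 : j = 0
      · subst hj0
        rw [hc0, h1]; simp
      · have hjr : |j| ≤ 2 * r := by
          simp only [Finset.mem_Icc] at hj
          rw [abs_le]; omega
        have : c j = 0 := h2 j hj0 hjr
        rw [this, zero_mul, if_neg hj0]
    rw [Finset.sum_congr rfl hterm, Finset.sum_ite_eq']
    rw [if_pos (by simp only [Finset.mem_Icc]; omega)]
end

section
/- If a CA involution H is left-permutative with left radius l (i.e., its neighbourhood's leftmost coordinate is -l with l ≥ 0 and the rule is permutative in that coordinate), then l = 0. -/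
theorem stmt10 {S : Type*} [Fintype S] [Nontrivial S] (l r : ℕ)
    (h : (Fin (l + r + 1) → S) → S)
    (H : (ℤ → S) → (ℤ → S))
    (hH : ∀ x i, H x i = h (fun k => x (i - (l : ℤ) + (k : ℤ))))
    (hperm : ∀ x : Fin (l + r + 1) → S,
      Function.Bijective fun y => h (Function.update x 0 y))
    (hinvo : H ∘ H = id) :
    l = 0 := by
  by_contra hl
  have hl1 : 1 ≤ l := Nat.one_le_iff_ne_zero.mpr hl
  obtain ⟨a, b, hab⟩ := exists_pair_ne S
  have key : ∀ (x x' : ℤ → S) (m : ℤ), (∀ j, m < j → x j = x' j) → x m ≠ x' m →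
      (∀ j, m + l < j → H x j = H x' j) ∧ H x (m + l) ≠ H x' (m + l) := by
    intro x x' m hagree hne
    constructor
    · intro j hj
      rw [hH, hH]
      congr 1
      funext k
      apply hagree
      have hk : (0:ℤ) ≤ (k.val : ℤ) := Int.natCast_nonneg _
      omega
    · rw [hH, hH]
      intro heq
      set w : Fin (l + r + 1) → S := fun k => x (m + l - l + k.val) with hw
      have hkpos : ∀ k : Fin (l + r + 1), k ≠ 0 → m < m + l - l + k.val := by
        intro k hk
        have : k.val ≠ 0 := by
          intro h0
          apply hk
          exact Fin.ext h0
        have : 1 ≤ (k.val : ℤ) := by omega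
        omega
      have hxw : (fun k : Fin (l+r+1) => x (m + (l:ℤ) - l + k.val)) =
          Function.update w 0 (x m) := by
        funext k
        by_cases hk : k = 0
        · subst hk
          simp [w]
        · rw [Function.update_of_ne hk]
      have hx'w : (fun k : Fin (l+r+1) => x' (m + (l:ℤ) - l + k.val)) =
          Function.update w 0 (x' m) := by
        funext k
        by_cases hk : k = 0
        · subst hk
          simp
        · rw [Function.update_of_ne hk]
          exact (hagree _ (hkpos k hk)).symm
      rw [hx'w] at heq
      have hweq : w = Function.update w 0 (x m) := hw.trans hxw
      nth_rewrite 1 [hweq] at heq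
      exact hne ((hperm w).1 heq)
  set x : ℤ → S := fun _ => a with hx
  set x' : ℤ → S := Function.update x (-(2*(l:ℤ))) b with hx'
  have hd : x (-(2*(l:ℤ))) ≠ x' (-(2*(l:ℤ))) := by
    simp [hx, hx', hab]
  have hag : ∀ j, (-(2*(l:ℤ))) < j → x j = x' j := by
    intro j hj
    simp only [hx']
    rw [Function.update_of_ne (by omega)]
  have h1 := key x x' (-(2*(l:ℤ))) hag hd
  have h2 := key (H x) (H x') (-(2*(l:ℤ)) + l) h1.1 h1.2
  have h0 : (-(2*(l:ℤ)) + l) + l = 0 := by ring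
  have hne0 := h2.2
  rw [h0] at hne0
  have e1 : H (H x) = x := congrFun hinvo x
  have e2 : H (H x') = x' := congrFun hinvo x'
  rw [e1, e2] at hne0
  apply hne0
  rw [hag 0 (by omega)]
end

section
/- If F is a p-periodic CA (F^p = id) on S^ℤ, then F is topologically conjugate (via an injective map onto its image) to the restriction to a subshift of the radius-0 CA F' on (S^p)^ℤ with local rule f'(a₀,…,a_{p-1}) = (a₁,…,a_{p-1},a₀); specifically, the map φ(x)_i = (x_i, F(x)_i, …, F^{p-1}(x)_i) is continuous, injective, shift-commuting, and satisfies φ ∘ F = F' ∘ φ. -/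
def shiftMap {S : Type*} (x : ℤ → S) : ℤ → S := fun i => x (i + 1)

def IsCA {S : Type*} [TopologicalSpace S] (F : (ℤ → S) → (ℤ → S)) : Prop :=
  Continuous F ∧ F ∘ shiftMap = shiftMap ∘ F

theorem stmt16 {S : Type*} [Fintype S] [TopologicalSpace S] [DiscreteTopology S]
    (p : ℕ) [NeZero p]
    (F : (ℤ → S) → (ℤ → S)) (hF : IsCA F) (hper : F^[p] = id)
    (φ : (ℤ → S) → (ℤ → (Fin p → S)))
    (hφ : ∀ x i k, φ x i k = F^[(k : ℕ)] x i)
    (F' : (ℤ → (Fin p → S)) → (ℤ → (Fin p → S)))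
    (hF' : ∀ c i (k : Fin p), F' c i k = c i (k + 1)) :
    Continuous φ ∧ Function.Injective φ ∧
      φ ∘ shiftMap = shiftMap ∘ φ ∧ φ ∘ F = F' ∘ φ := by
  obtain ⟨hcont, hshift⟩ := hF
  -- iterates commute with shift
  have hiter : ∀ n : ℕ, F^[n] ∘ shiftMap = shiftMap ∘ F^[n] := by
    intro n
    induction n with
    | zero => simp
    | succ n ih =>
      calc F^[n+1] ∘ shiftMap = F ∘ (F^[n] ∘ shiftMap) := by
            rw [Function.iterate_succ']; rfl
        _ = F ∘ (shiftMap ∘ F^[n]) := by rw [ih]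
        _ = (F ∘ shiftMap) ∘ F^[n] := rfl
        _ = (shiftMap ∘ F) ∘ F^[n] := by rw [hshift]
        _ = shiftMap ∘ F^[n+1] := by rw [Function.iterate_succ']; rfl
  have hmod : ∀ n : ℕ, F^[n % p] = F^[n] := by
    intro n
    conv_rhs => rw [show n = n % p + p * (n / p) from (Nat.mod_add_div n p).symm]
    rw [Function.iterate_add, Function.iterate_mul, hper]
    simp
  refine ⟨?_, ?_, ?_, ?_⟩
  · apply continuous_pi; intro i
    apply continuous_pi; intro k
    have : (fun x => φ x i k) = (fun y : ℤ → S => y i) ∘ F^[(k : ℕ)] := by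
      funext x; simp [hφ]
    rw [this]
    exact (continuous_apply i).comp (hcont.iterate _)
  · intro x y h
    funext i
    have := congrFun (congrFun h i) (0 : Fin p)
    simpa [hφ, Fin.val_zero] using this
  · funext x
    funext i
    funext k
    have := congrFun (hiter (k : ℕ)) x
    simp only [Function.comp_apply, hφ, shiftMap]
    rw [← Function.comp_apply (f := F^[(k:ℕ)]) (g := shiftMap), hiter]
    rfl
  · funext x
    funext i
    funext k
    simp only [Function.comp_apply, hφ, hF']
    have : ((k + 1 : Fin p) : ℕ) = ((k : ℕ) + 1) % p := by
      simp [Fin.add_def]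
    rw [this, hmod, Function.iterate_succ_apply]
end
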